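/- With n = 3 and k = 6 (the 11-dimensional lens space L₃¹¹ = S¹¹/ℤ₃): (ηRS(3,6,1) − ηRS(3,6,0)) − 2·(ηD(3,6,1) − ηD(3,6,0)) = 1/3. (This is the value 1/3 ∈ ℝ/ℤ of the type IIB duality anomaly on the generator L₃¹¹ of the ℤ₂₇ factor of the bordism group Ω₁₁^{Spin-GL⁺(2,ℤ)}.) -/

import Mathlib

open scoped BigOperators

/-- The Atiyah–Patodi–Singer eta invariant of the charge-`q` Dirac operator on the
lens space `L_n^{2k-1} = S^{2k-1}/ℤ_n`. -/
noncomputable def etaD (n k : ℕ) (q : ℤ) : ℂ :=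
  -(1 / ((n : ℂ) * Complex.I ^ k)) *
    ∑ j ∈ Finset.Icc 1 (n - 1),
      Complex.exp (-(2 * (Real.pi : ℂ) * Complex.I * (q : ℂ) * (j : ℂ)) / (n : ℂ)) /
        (2 * ((Real.sin (Real.pi * (j : ℝ) / (n : ℝ)) : ℝ) : ℂ)) ^ k

/-- The Atiyah–Patodi–Singer eta invariant of the charge-`q` Rarita–Schwinger operator on the
lens space `L_n^{2k-1} = S^{2k-1}/ℤ_n`. -/
noncomputable def etaRS (n k : ℕ) (q : ℤ) : ℂ :=
  -(1 / ((n : ℂ) * Complex.I ^ k)) *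
    ∑ j ∈ Finset.Icc 1 (n - 1),
      Complex.exp (-(2 * (Real.pi : ℂ) * Complex.I * (q : ℂ) * (j : ℂ)) / (n : ℂ)) *
        (2 * (k : ℂ) * ((Real.cos (2 * Real.pi * (j : ℝ) / (n : ℝ)) : ℝ) : ℂ) - 1) /
        (2 * ((Real.sin (Real.pi * (j : ℝ) / (n : ℝ)) : ℝ) : ℂ)) ^ k

/-!
For `n = 3` both `j = 1, 2` give `2 sin(πj/3) = √3` and `cos(2πj/3) = -1/2`, so every summand
has the same denominator `(√3)^k`, and the Rarita–Schwinger numerator `2k cos(2πj/3) - 1` is the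
constant `-(k + 1)`. Hence `ηRS = -(k + 1) ηD`, and the charge-difference of `ηD` reduces to the
sum `ω + ω²` over the nontrivial cube roots of unity, which is `-1`. For `k = 6` the whole
combination is `-9 / (i√3)⁶ = 1/3`.
-/

open Complex
open scoped Real

lemma IsPrimitiveRoot.sum_Icc_pow_eq_neg_one {R : Type*} [CommRing R] [IsDomain R] {ζ : R}
    {n : ℕ} (hζ : IsPrimitiveRoot ζ n) (hn : 1 < n) :
    ∑ j ∈ Finset.Icc 1 (n - 1), ζ ^ j = -1 := by
  have h := hζ.geom_sum_eq_zero hn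
  rw [Finset.range_eq_Ico, Finset.sum_eq_sum_Ico_succ_bot (by omega), pow_zero] at h
  have hIcc : Finset.Icc 1 (n - 1) = Finset.Ico 1 n := by ext; simp; omega
  rw [hIcc, eq_neg_iff_add_eq_zero, add_comm, h]

lemma exp_neg_two_pi_I_mul_div (z : ℂ) (j : ℕ) :
    exp (-(2 * π * I * j) / z) = (exp (2 * π * I / z))⁻¹ ^ j := by
  rw [← Complex.exp_neg, ← exp_nat_mul]
  ring_nf

lemma sin_pi_mul_div_three {j : ℕ} (hj : j ∈ Finset.Icc 1 2) :
    Real.sin (π * j / 3) = √3 / 2 := by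
  obtain rfl | rfl : j = 1 ∨ j = 2 := by simp at hj; omega
  · norm_num [mul_comm π, ← Real.sin_pi_div_three]
  · rw [show π * ((2 : ℕ) : ℝ) / 3 = π - π / 3 by push_cast; ring, Real.sin_pi_sub,
      Real.sin_pi_div_three]

lemma cos_two_pi_mul_div_three {j : ℕ} (hj : j ∈ Finset.Icc 1 2) :
    Real.cos (2 * π * j / 3) = -(1 / 2) := by
  obtain rfl | rfl : j = 1 ∨ j = 2 := by simp at hj; omega
  · rw [show 2 * π * ((1 : ℕ) : ℝ) / 3 = π - π / 3 by push_cast; ring, Real.cos_pi_sub,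
      Real.cos_pi_div_three]
  · rw [show 2 * π * ((2 : ℕ) : ℝ) / 3 = π / 3 + π by push_cast; ring, Real.cos_add_pi,
      Real.cos_pi_div_three]

lemma etaD_three (k : ℕ) (q : ℤ) :
    etaD 3 k q = -(1 / (3 * (I * √3) ^ k)) *
      ∑ j ∈ Finset.Icc (1 : ℕ) 2, exp (-(2 * π * I * q * (j : ℂ)) / 3) := by
  simp only [etaD, Nat.cast_ofNat, Nat.reduceSub]
  rw [mul_pow, ← div_div, Finset.mul_sum, Finset.mul_sum]
  refine Finset.sum_congr rfl fun j hj => ?_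
  rw [sin_pi_mul_div_three hj]
  push_cast
  ring

lemma etaRS_three (k : ℕ) (q : ℤ) : etaRS 3 k q = -(k + 1) * etaD 3 k q := by
  simp only [etaRS, etaD, Nat.cast_ofNat, Nat.reduceSub]
  rw [mul_left_comm]
  congr 1
  rw [Finset.mul_sum]
  refine Finset.sum_congr rfl fun j hj => ?_
  rw [cos_two_pi_mul_div_three hj]
  push_cast
  ring

lemma etaD_three_one_sub_zero (k : ℕ) : etaD 3 k 1 - etaD 3 k 0 = ((I * √3) ^ k)⁻¹ := by
  have hζ : IsPrimitiveRoot (exp (2 * π * I / 3))⁻¹ 3 := by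
    simpa using (isPrimitiveRoot_exp 3 (by norm_num)).inv
  rw [etaD_three, etaD_three]
  simp only [Int.cast_one, mul_one, exp_neg_two_pi_I_mul_div]
  rw [hζ.sum_Icc_pow_eq_neg_one (by norm_num)]
  simp
  ring

/-- The type IIB duality anomaly on the generator `L₃¹¹` of the `ℤ₂₇` factor of
`Ω₁₁^{Spin-GL⁺(2,ℤ)}` equals `1/3`. -/
theorem anomaly_L3_11 :
    (etaRS 3 6 1 - etaRS 3 6 0) - 2 * (etaD 3 6 1 - etaD 3 6 0) = 1 / 3 := by
  have h27 : (I * √3) ^ 6 = -27 := by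
    rw [mul_pow, show (6 : ℕ) = 2 * 3 from rfl, pow_mul, pow_mul, I_sq, ← ofReal_pow,
      Real.sq_sqrt (by norm_num)]
    norm_num
  rw [etaRS_three, etaRS_three, ← mul_sub, ← sub_mul, etaD_three_one_sub_zero, h27]
  norm_num
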